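/- Let {W, W̃, Z} be an LTONP data set with Pick operator Λ = WW* − W̃W̃* strictly positive, set P = WW*, B = W E_𝒴, B̃ = W̃ E_𝒰, and let C : 𝒵 → ℰ and D : 𝒴 → ℰ be an admissible pair of complementary operators. Define R∘ = (I_𝒰 + B̃*Λ⁻¹B̃)^{-1/2} and Q∘ = (I_ℰ + C P (Λ⁻¹ − P⁻¹) P C*)^{-1/2}. Then the operator τ₁ = [I_𝒰 ; −Λ^{-1/2} B̃] R∘ : 𝒰 → 𝒰 ⊕ 𝒵 is an isometry whose range equals 𝒢 = {(u, z) ∈ 𝒰 ⊕ 𝒵 : B̃u + Λ^{1/2} z = 0}, and the operator τ₂ = [D* ; Λ^{-1/2} P C*] Q∘ : ℰ → 𝒴 ⊕ 𝒵 is an isometry whose range equals 𝒢′ = {(y, z) ∈ 𝒴 ⊕ 𝒵 : By + ZΛ^{1/2} z = 0}. -/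

import Mathlib

/- Statement 9 (Lemma on the isometries τ₁ and τ₂): Let {W, W̃, Z} be an LTONP data
set with strictly positive Pick operator Λ, P = WW*, B = W E_𝒴, B̃ = W̃ E_𝒰, and let
C : 𝒵 → ℰ, D : 𝒴 → ℰ be an admissible pair of complementary operators.  With
R∘ = (I + B̃*Λ⁻¹B̃)^{-1/2} and Q∘ = (I + CP(Λ⁻¹ − P⁻¹)PC*)^{-1/2}, the operator
τ₁ = [I ; −Λ^{-1/2}B̃]R∘ : 𝒰 → 𝒰 ⊕ 𝒵 is an isometry with range
𝒢 = {(u,z) : B̃u + Λ^{1/2}z = 0}, and τ₂ = [D* ; Λ^{-1/2}PC*]Q∘ : ℰ → 𝒴 ⊕ 𝒵 is an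
isometry with range 𝒢′ = {(y,z) : By + ZΛ^{1/2}z = 0}. -/

open ContinuousLinearMap Filter Topology

noncomputable section

local notation "ℓ²(" X ")" => lp (fun _ : ℕ => X) 2

/-- A bounded operator on a Hilbert space is strictly positive if it is positive
(self-adjoint with non-negative quadratic form) and invertible. -/
def IsStrictlyPositiveOp {H : Type*} [NormedAddCommGroup H] [InnerProductSpace ℂ H]
    [CompleteSpace H] (T : H →L[ℂ] H) : Prop :=
  T.IsPositive ∧ IsUnit T

/-- column operator `[b₁ ; b₂] : A → C ⊕ D`. -/
noncomputable def colC {A C D : Type*}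
    [NormedAddCommGroup A] [InnerProductSpace ℂ A]
    [NormedAddCommGroup C] [InnerProductSpace ℂ C]
    [NormedAddCommGroup D] [InnerProductSpace ℂ D]
    (b₁ : A →L[ℂ] C) (b₂ : A →L[ℂ] D) : A →L[ℂ] WithLp 2 (C × D) :=
  ((WithLp.prodContinuousLinearEquiv 2 ℂ C D).symm).toContinuousLinearMap.comp (b₁.prod b₂)

/-! Both operators have the form `τ = [X ; Y] T` with `T` a positive square root of
`(X*X + Y*Y)⁻¹`, so `τ*τ = T (X*X + Y*Y) T = I`. For `τ₁` the middle operator is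
`I + B̃*Λ⁻¹B̃ ≥ I`; for `τ₂` the identity `DD* + CPC* = I` turns it into
`I + CP(Λ⁻¹ − P⁻¹)PC*`, which is `≥ I` because `Λ ≤ P` forces `P⁻¹ ≤ Λ⁻¹`.
As `T` is invertible, `τ` has the range of `[X ; Y]`. For `τ₁` this is the graph of
`−Λ^{-1/2}B̃`. For `τ₂`, the identities `D*D + B*P⁻¹B = I`, `D*C + B*P⁻¹Z = 0` and
`C*C + Z*P⁻¹Z = P⁻¹` show that every solution of `By + Zz = 0` is `(D*e, PC*e)` with
`e = Dy + Cz`, while `BD* + ZPC* = 0` gives the converse. -/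

theorem isUnit_of_mul_self_eq_ringInverse {M₀ : Type*} [MonoidWithZero M₀] {m r : M₀}
    (hm : IsUnit m) (hr : r * r = Ring.inverse m) : IsUnit r :=
  ((Commute.refl r).isUnit_mul_iff.mp (hr ▸ hm.ringInverse)).1

theorem mul_mul_eq_one_of_mul_self_eq_ringInverse {M₀ : Type*} [MonoidWithZero M₀] {m r : M₀}
    (hm : IsUnit m) (hr : r * r = Ring.inverse m) : r * (m * r) = 1 := by
  refine (isUnit_of_mul_self_eq_ringInverse hm hr).mul_right_cancel ?_
  rw [mul_assoc, mul_assoc, hr, Ring.mul_inverse_cancel m hm, mul_one, one_mul]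

section ColumnOperator

variable {H K₁ K₂ : Type*}
  [NormedAddCommGroup H] [InnerProductSpace ℂ H]
  [NormedAddCommGroup K₁] [InnerProductSpace ℂ K₁]
  [NormedAddCommGroup K₂] [InnerProductSpace ℂ K₂]

theorem ringInverse_apply_eq_iff {L : H →L[ℂ] H} (hL : IsUnit L) {x y : H} :
    Ring.inverse L x = y ↔ x = L y := by
  obtain ⟨u, rfl⟩ := hL
  rw [Ring.inverse_unit]
  constructor
  · rintro rfl
    rw [← mul_apply_eq_comp, Units.mul_inv, one_apply_eq_self]
  · rintro rfl
    rw [← mul_apply_eq_comp, Units.inv_mul, one_apply_eq_self]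

theorem ringInverse_comp_self (L : H →L[ℂ] H) :
    Ring.inverse L ∘L Ring.inverse L = Ring.inverse (L ∘L L) :=
  (Ring.mul_inverse_rev' (Commute.refl L)).symm

theorem mem_range_colC_iff {X : H →L[ℂ] K₁} {Y : H →L[ℂ] K₂} {p : WithLp 2 (K₁ × K₂)} :
    p ∈ Set.range (colC X Y) ↔
      ∃ h, X h = (WithLp.equiv 2 (K₁ × K₂) p).1 ∧ Y h = (WithLp.equiv 2 (K₁ × K₂) p).2 := by
  constructor
  · rintro ⟨h, rfl⟩
    exact ⟨h, rfl, rfl⟩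
  · rintro ⟨h, h₁, h₂⟩
    exact ⟨h, (WithLp.equiv 2 (K₁ × K₂)).injective (Prod.ext h₁ h₂)⟩

theorem range_colC_comp_of_isUnit (X : H →L[ℂ] K₁) (Y : H →L[ℂ] K₂) {T : H →L[ℂ] H}
    (hT : IsUnit T) : Set.range (colC (X ∘L T) (Y ∘L T)) = Set.range (colC X Y) :=
  Function.Surjective.range_comp (g := colC X Y)
    fun h => ⟨Ring.inverse T h, ((ringInverse_apply_eq_iff hT).mp rfl).symm⟩

theorem range_colC_neg_ringInverse_comp_comp {G : K₁ →L[ℂ] K₂} {L : K₂ →L[ℂ] K₂}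
    {R : K₁ →L[ℂ] K₁} (hR : IsUnit R) (hL : IsUnit L) :
    Set.range (colC R (-((Ring.inverse L ∘L G) ∘L R))) =
      {p | G (WithLp.equiv 2 (K₁ × K₂) p).1 + L (WithLp.equiv 2 (K₁ × K₂) p).2 = 0} := by
  change Set.range (colC ((1 : K₁ →L[ℂ] K₁) ∘L R) ((-(Ring.inverse L ∘L G)) ∘L R)) = _
  rw [range_colC_comp_of_isUnit 1 _ hR]
  ext p
  rw [mem_range_colC_iff, Set.mem_ofPred_eq]
  simp only [one_apply_eq_self, neg_apply, comp_apply, exists_eq_left,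
    neg_eq_iff_eq_neg, ringInverse_apply_eq_iff hL, map_neg, eq_neg_iff_add_eq_zero]

variable [CompleteSpace H] [CompleteSpace K₁] [CompleteSpace K₂]

theorem isUnit_one_add_of_isPositive {A : H →L[ℂ] H} (hA : A.IsPositive) : IsUnit (1 + A) :=
  (isStrictlyPositive_one.add_nonneg ((nonneg_iff_isPositive A).mpr hA)).isUnit

theorem norm_colC_apply_of_adjoint_comp_add {X : H →L[ℂ] K₁} {Y : H →L[ℂ] K₂}
    (h : adjoint X ∘L X + adjoint Y ∘L Y = 1) (u : H) : ‖colC X Y u‖ = ‖u‖ := by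
  refine (sq_eq_sq₀ (norm_nonneg _) (norm_nonneg _)).mp ?_
  calc ‖colC X Y u‖ ^ 2 = ‖X u‖ ^ 2 + ‖Y u‖ ^ 2 := WithLp.prod_norm_sq_eq_of_L2 _
    _ = RCLike.re (inner ℂ ((adjoint X ∘L X + adjoint Y ∘L Y) u) u) := by
      rw [X.apply_norm_sq_eq_inner_adjoint_left, Y.apply_norm_sq_eq_inner_adjoint_left,
        add_apply, inner_add_left, map_add]
    _ = ‖u‖ ^ 2 := by
      rw [h, one_apply_eq_self, inner_self_eq_norm_sq]

theorem norm_colC_comp_apply_of_mul_self_eq_ringInverse {X : H →L[ℂ] K₁} {Y : H →L[ℂ] K₂}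
    {M T : H →L[ℂ] H} (hM : adjoint X ∘L X + adjoint Y ∘L Y = M) (hMu : IsUnit M)
    (hT : IsSelfAdjoint T) (hTT : T ∘L T = Ring.inverse M) (u : H) :
    ‖colC (X ∘L T) (Y ∘L T) u‖ = ‖u‖ := by
  refine norm_colC_apply_of_adjoint_comp_add ?_ u
  rw [← mul_mul_eq_one_of_mul_self_eq_ringInverse hMu hTT, ← hM]
  simp only [adjoint_comp, hT.adjoint_eq, mul_def,
    add_comp, comp_add, comp_assoc]

theorem norm_colC_neg_comp_apply {S : K₁ →L[ℂ] K₂} {R : K₁ →L[ℂ] K₁} (hR : IsSelfAdjoint R)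
    (hRR : R ∘L R = Ring.inverse (1 + adjoint S ∘L S)) (u : K₁) :
    ‖colC R (-(S ∘L R)) u‖ = ‖u‖ := by
  have hM : adjoint (1 : K₁ →L[ℂ] K₁) ∘L 1 + adjoint (-S) ∘L (-S) = 1 + adjoint S ∘L S := by
    rw [adjoint_one, ← mul_def, mul_one, map_neg,
      neg_comp, comp_neg, neg_neg]
  exact neg_comp S R ▸ norm_colC_comp_apply_of_mul_self_eq_ringInverse hM
    (isUnit_one_add_of_isPositive S.isPositive_adjoint_comp_self) hR hRR u

end ColumnOperator

section ComplementaryPair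

variable {𝒴 𝒵 ℰ : Type*}
  [NormedAddCommGroup 𝒴] [InnerProductSpace ℂ 𝒴] [CompleteSpace 𝒴]
  [NormedAddCommGroup 𝒵] [InnerProductSpace ℂ 𝒵] [CompleteSpace 𝒵]
  [NormedAddCommGroup ℰ] [InnerProductSpace ℂ ℰ] [CompleteSpace ℰ]
  {B : 𝒴 →L[ℂ] 𝒵} {Z : 𝒵 →L[ℂ] 𝒵} {C : 𝒵 →L[ℂ] ℰ} {D : 𝒴 →L[ℂ] ℰ}

theorem adjoint_apply_add_of_complementary {Pinv : 𝒵 →L[ℂ] 𝒵} (hPinv : IsSelfAdjoint Pinv)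
    (h₄ : adjoint D ∘L D + adjoint B ∘L Pinv ∘L B = 1)
    (h₅ : adjoint D ∘L C + adjoint B ∘L Pinv ∘L Z = 0)
    (h₆ : adjoint C ∘L C + adjoint Z ∘L Pinv ∘L Z = Pinv) {y : 𝒴} {z : 𝒵}
    (h : B y + Z z = 0) :
    adjoint D (D y + C z) = y ∧ adjoint C (D y + C z) = Pinv z := by
  have h₅' : adjoint C ∘L D + adjoint Z ∘L Pinv ∘L B = 0 := by
    simpa [adjoint_comp, hPinv.adjoint_eq, comp_assoc]
      using congr_arg adjoint h₅
  have hy : adjoint D (D y + C z) + adjoint B (Pinv (B y + Z z)) = y := by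
    have := congr($h₄ y + $h₅ z)
    simp only [add_apply, comp_apply, one_apply_eq_self, zero_apply,
      add_zero] at this
    refine Eq.trans ?_ this
    rw [map_add, map_add, map_add]
    abel
  have hz : adjoint C (D y + C z) + adjoint Z (Pinv (B y + Z z)) = Pinv z := by
    have := congr($h₅' y + $h₆ z)
    simp only [add_apply, comp_apply, zero_apply, zero_add] at this
    refine Eq.trans ?_ this
    rw [map_add, map_add, map_add]
    abel
  rw [h, map_zero, map_zero, add_zero] at hy hz
  exact ⟨hy, hz⟩

theorem range_colC_adjoint_of_complementary {P L : 𝒵 →L[ℂ] 𝒵} (hP : IsSelfAdjoint P)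
    (hPu : IsUnit P) (hL : IsUnit L) (h₂ : B ∘L adjoint D + Z ∘L P ∘L adjoint C = 0)
    (h₄ : adjoint D ∘L D + adjoint B ∘L Ring.inverse P ∘L B = 1)
    (h₅ : adjoint D ∘L C + adjoint B ∘L Ring.inverse P ∘L Z = 0)
    (h₆ : adjoint C ∘L C + adjoint Z ∘L Ring.inverse P ∘L Z = Ring.inverse P) :
    Set.range (colC (adjoint D) (Ring.inverse L ∘L P ∘L adjoint C)) =
      {p | B (WithLp.equiv 2 (𝒴 × 𝒵) p).1 + Z (L (WithLp.equiv 2 (𝒴 × 𝒵) p).2) = 0} := by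
  ext p
  rw [mem_range_colC_iff, Set.mem_ofPred_eq]
  simp only [comp_apply, ringInverse_apply_eq_iff hL]
  generalize (WithLp.equiv 2 (𝒴 × 𝒵) p).1 = y
  generalize L (WithLp.equiv 2 (𝒴 × 𝒵) p).2 = z
  constructor
  · rintro ⟨e, rfl, rfl⟩
    simpa using congr($h₂ e)
  · intro h
    obtain ⟨hy, hz⟩ := adjoint_apply_add_of_complementary hP.ringInverse h₄ h₅ h₆ h
    refine ⟨D y + C z, hy, ?_⟩
    rw [hz, ← mul_apply_eq_comp, Ring.mul_inverse_cancel P hPu, one_apply_eq_self]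

theorem comp_adjoint_add_eq_one_add_conj_sub {P : 𝒵 →L[ℂ] 𝒵} (hPu : IsUnit P)
    (h₁ : D ∘L adjoint D + C ∘L P ∘L adjoint C = 1) (A : 𝒵 →L[ℂ] 𝒵) :
    D ∘L adjoint D + C ∘L P ∘L A ∘L P ∘L adjoint C =
      1 + C ∘L P ∘L (A - Ring.inverse P) ∘L P ∘L adjoint C := by
  have hPinv : Ring.inverse P ∘L P ∘L adjoint C = adjoint C := by
    rw [← comp_assoc, ← mul_def,
      Ring.inverse_mul_cancel P hPu, one_def, id_comp]
  rw [← h₁, sub_comp, comp_sub,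
    comp_sub, hPinv]
  abel

theorem isUnit_one_add_conj_ringInverse_sub {P Λ : 𝒵 →L[ℂ] 𝒵} (hΛ : IsStrictlyPositive Λ)
    (hΛP : Λ ≤ P) (hP : IsSelfAdjoint P) (C : 𝒵 →L[ℂ] ℰ) :
    IsUnit (1 + C ∘L P ∘L (Ring.inverse Λ - Ring.inverse P) ∘L P ∘L adjoint C) := by
  have hinv : (Ring.inverse Λ - Ring.inverse P).IsPositive :=
    (nonneg_iff_isPositive _).mp
      (sub_nonneg.mpr (CStarAlgebra.ringInverse_le_ringInverse hΛP hΛ))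
  apply isUnit_one_add_of_isPositive
  simpa [adjoint_comp, hP.adjoint_eq, comp_assoc]
    using hinv.conj_adjoint (C ∘L P)

end ComplementaryPair

variable {𝒵 𝒴 𝒰 ℰ : Type*}
  [NormedAddCommGroup 𝒵] [InnerProductSpace ℂ 𝒵] [CompleteSpace 𝒵]
  [NormedAddCommGroup 𝒴] [InnerProductSpace ℂ 𝒴] [CompleteSpace 𝒴]
  [NormedAddCommGroup 𝒰] [InnerProductSpace ℂ 𝒰] [CompleteSpace 𝒰]
  [NormedAddCommGroup ℰ] [InnerProductSpace ℂ ℰ] [CompleteSpace ℰ]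

theorem tau_isometries_onto_G_and_G'_general
    -- the LTONP data set {W, W̃, Z}
    (Z : 𝒵 →L[ℂ] 𝒵) (W : ℓ²(𝒴) →L[ℂ] 𝒵) (Wt : ℓ²(𝒰) →L[ℂ] 𝒵)
    -- P, Λ, B, B̃
    (P Λ : 𝒵 →L[ℂ] 𝒵) (B : 𝒴 →L[ℂ] 𝒵) (Bt : 𝒰 →L[ℂ] 𝒵)
    (hP : P = W.comp (adjoint W))
    (hΛ : Λ = W.comp (adjoint W) - Wt.comp (adjoint Wt))
    -- the Pick operator is strictly positive
    (hpos : IsStrictlyPositiveOp Λ)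
    -- Λh = Λ^{1/2} is the positive square root of Λ
    (Λh : 𝒵 →L[ℂ] 𝒵) (hΛh : Λh.IsPositive ∧ Λh.comp Λh = Λ)
    -- {C, D} is an admissible pair of complementary operators
    (C : 𝒵 →L[ℂ] ℰ) (D : 𝒴 →L[ℂ] ℰ)
    (hCD1 : D.comp (adjoint D) + C.comp (P.comp (adjoint C)) = 1)
    (hCD2 : B.comp (adjoint D) + Z.comp (P.comp (adjoint C)) = 0)
    (hCD4 : (adjoint D).comp D + (adjoint B).comp ((Ring.inverse P).comp B) = 1)
    (hCD5 : (adjoint D).comp C + (adjoint B).comp ((Ring.inverse P).comp Z) = 0)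
    (hCD6 : (adjoint C).comp C + (adjoint Z).comp ((Ring.inverse P).comp Z) =
      Ring.inverse P)
    -- R∘ = (I + B̃*Λ⁻¹B̃)^{-1/2} and Q∘ = (I + CP(Λ⁻¹ − P⁻¹)PC*)^{-1/2}
    (R : 𝒰 →L[ℂ] 𝒰)
    (hR : R.IsPositive ∧
      R.comp R = Ring.inverse (1 + (adjoint Bt).comp ((Ring.inverse Λ).comp Bt)))
    (Q : ℰ →L[ℂ] ℰ)
    (hQ : Q.IsPositive ∧
      Q.comp Q = Ring.inverse (1 + C.comp (P.comp
        (((Ring.inverse Λ - Ring.inverse P)).comp (P.comp (adjoint C)))))) :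
    -- τ₁ = [I ; −Λ^{-1/2}B̃] R∘ is an isometry with range 𝒢
    (∀ u : 𝒰, ‖(colC R (-(((Ring.inverse Λh).comp Bt).comp R))) u‖ = ‖u‖) ∧
    (Set.range (colC R (-(((Ring.inverse Λh).comp Bt).comp R))) =
      {p : WithLp 2 (𝒰 × 𝒵) |
        Bt ((WithLp.equiv 2 (𝒰 × 𝒵)) p).1 + Λh ((WithLp.equiv 2 (𝒰 × 𝒵)) p).2 = 0}) ∧
    -- τ₂ = [D* ; Λ^{-1/2}PC*] Q∘ is an isometry with range 𝒢′
    (∀ x : ℰ,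
      ‖(colC ((adjoint D).comp Q)
          (((Ring.inverse Λh).comp (P.comp ((adjoint C).comp Q))))) x‖ = ‖x‖) ∧
    (Set.range (colC ((adjoint D).comp Q)
        (((Ring.inverse Λh).comp (P.comp ((adjoint C).comp Q))))) =
      {p : WithLp 2 (𝒴 × 𝒵) |
        B ((WithLp.equiv 2 (𝒴 × 𝒵)) p).1 +
          Z (Λh (((WithLp.equiv 2 (𝒴 × 𝒵)) p).2)) = 0}) := by
  have hΛsp : IsStrictlyPositive Λ := ⟨(nonneg_iff_isPositive Λ).mpr hpos.1, hpos.2⟩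
  have hΛhu : IsUnit Λh :=
    ((Commute.refl Λh).isUnit_mul_iff.mp (hΛh.2 ▸ hpos.2 : IsUnit (Λh ∘L Λh))).1
  have hΛh_inv : IsSelfAdjoint (Ring.inverse Λh) := hΛh.1.isSelfAdjoint.ringInverse
  have hΛh_inv_sq : Ring.inverse Λh ∘L Ring.inverse Λh = Ring.inverse Λ :=
    hΛh.2 ▸ ringInverse_comp_self Λh
  have hP_sa : IsSelfAdjoint P := hP ▸ (isPositive_self_comp_adjoint W).isSelfAdjoint
  have hΛP : Λ ≤ P := by
    rw [ContinuousLinearMap.le_def, hP, hΛ, sub_sub_cancel]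
    exact isPositive_self_comp_adjoint Wt
  have hPu : IsUnit P := CStarAlgebra.isUnit_of_le Λ hΛP hΛsp
  have hR' : R ∘L R = Ring.inverse
      (1 + adjoint (Ring.inverse Λh ∘L Bt) ∘L Ring.inverse Λh ∘L Bt) := by
    rw [hR.2, adjoint_comp, hΛh_inv.adjoint_eq, ← hΛh_inv_sq]
    rfl
  have hRu : IsUnit R := isUnit_of_mul_self_eq_ringInverse
    (isUnit_one_add_of_isPositive (isPositive_adjoint_comp_self _)) hR'
  have hM₂ : adjoint (adjoint D) ∘L adjoint D +
      adjoint (Ring.inverse Λh ∘L P ∘L adjoint C) ∘L Ring.inverse Λh ∘L P ∘L adjoint C =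
      1 + C ∘L P ∘L (Ring.inverse Λ - Ring.inverse P) ∘L P ∘L adjoint C := by
    rw [← comp_adjoint_add_eq_one_add_conj_sub hPu hCD1]
    simp only [adjoint_comp, adjoint_adjoint, hΛh_inv.adjoint_eq, hP_sa.adjoint_eq, comp_assoc]
    rw [← comp_assoc (Ring.inverse Λh), hΛh_inv_sq]
  have hM₂u := isUnit_one_add_conj_ringInverse_sub hΛsp hΛP hP_sa C
  refine ⟨norm_colC_neg_comp_apply hR.1.isSelfAdjoint hR',
    range_colC_neg_ringInverse_comp_comp hRu hΛhu, fun x => ?_, ?_⟩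
  · simpa only [comp_assoc] using
      norm_colC_comp_apply_of_mul_self_eq_ringInverse hM₂ hM₂u hQ.1.isSelfAdjoint hQ.2 x
  · have hQ_range := range_colC_comp_of_isUnit (adjoint D) (Ring.inverse Λh ∘L P ∘L adjoint C)
      (isUnit_of_mul_self_eq_ringInverse hM₂u hQ.2)
    simp only [comp_assoc] at hQ_range
    exact hQ_range.trans (range_colC_adjoint_of_complementary hP_sa hPu hΛhu hCD2 hCD4 hCD5 hCD6)

theorem tau_isometries_onto_G_and_G'
    -- the unilateral forward shifts and the embeddings onto the zeroth coordinate
    (S𝒴 : ℓ²(𝒴) →L[ℂ] ℓ²(𝒴)) (S𝒰 : ℓ²(𝒰) →L[ℂ] ℓ²(𝒰))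
    (hS𝒴0 : ∀ x : ℓ²(𝒴), S𝒴 x 0 = 0)
    (hS𝒴1 : ∀ (x : ℓ²(𝒴)) (n : ℕ), S𝒴 x (n + 1) = x n)
    (hS𝒰0 : ∀ x : ℓ²(𝒰), S𝒰 x 0 = 0)
    (hS𝒰1 : ∀ (x : ℓ²(𝒰)) (n : ℕ), S𝒰 x (n + 1) = x n)
    (E𝒴 : 𝒴 →L[ℂ] ℓ²(𝒴)) (E𝒰 : 𝒰 →L[ℂ] ℓ²(𝒰))
    (hE𝒴0 : ∀ y : 𝒴, E𝒴 y 0 = y) (hE𝒴1 : ∀ (y : 𝒴) (n : ℕ), E𝒴 y (n + 1) = 0)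
    (hE𝒰0 : ∀ u : 𝒰, E𝒰 u 0 = u) (hE𝒰1 : ∀ (u : 𝒰) (n : ℕ), E𝒰 u (n + 1) = 0)
    -- the LTONP data set {W, W̃, Z}
    (Z : 𝒵 →L[ℂ] 𝒵) (W : ℓ²(𝒴) →L[ℂ] 𝒵) (Wt : ℓ²(𝒰) →L[ℂ] 𝒵)
    (hW : Z.comp W = W.comp S𝒴) (hWt : Z.comp Wt = Wt.comp S𝒰)
    -- P, Λ, B, B̃
    (P Λ : 𝒵 →L[ℂ] 𝒵) (B : 𝒴 →L[ℂ] 𝒵) (Bt : 𝒰 →L[ℂ] 𝒵)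
    (hP : P = W.comp (adjoint W))
    (hΛ : Λ = W.comp (adjoint W) - Wt.comp (adjoint Wt))
    (hB : B = W.comp E𝒴) (hBt : Bt = Wt.comp E𝒰)
    -- the Pick operator is strictly positive
    (hpos : IsStrictlyPositiveOp Λ)
    -- Λh = Λ^{1/2} is the positive square root of Λ
    (Λh : 𝒵 →L[ℂ] 𝒵) (hΛh : Λh.IsPositive ∧ Λh.comp Λh = Λ)
    -- {C, D} is an admissible pair of complementary operators
    (C : 𝒵 →L[ℂ] ℰ) (D : 𝒴 →L[ℂ] ℰ)
    (hCD1 : D.comp (adjoint D) + C.comp (P.comp (adjoint C)) = 1)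
    (hCD2 : B.comp (adjoint D) + Z.comp (P.comp (adjoint C)) = 0)
    (hCD3 : B.comp (adjoint B) + Z.comp (P.comp (adjoint Z)) = P)
    (hCD4 : (adjoint D).comp D + (adjoint B).comp ((Ring.inverse P).comp B) = 1)
    (hCD5 : (adjoint D).comp C + (adjoint B).comp ((Ring.inverse P).comp Z) = 0)
    (hCD6 : (adjoint C).comp C + (adjoint Z).comp ((Ring.inverse P).comp Z) =
      Ring.inverse P)
    -- R∘ = (I + B̃*Λ⁻¹B̃)^{-1/2} and Q∘ = (I + CP(Λ⁻¹ − P⁻¹)PC*)^{-1/2}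
    (R : 𝒰 →L[ℂ] 𝒰)
    (hR : R.IsPositive ∧
      R.comp R = Ring.inverse (1 + (adjoint Bt).comp ((Ring.inverse Λ).comp Bt)))
    (Q : ℰ →L[ℂ] ℰ)
    (hQ : Q.IsPositive ∧
      Q.comp Q = Ring.inverse (1 + C.comp (P.comp
        (((Ring.inverse Λ - Ring.inverse P)).comp (P.comp (adjoint C)))))) :
    -- τ₁ = [I ; −Λ^{-1/2}B̃] R∘ is an isometry with range 𝒢
    (∀ u : 𝒰, ‖(colC R (-(((Ring.inverse Λh).comp Bt).comp R))) u‖ = ‖u‖) ∧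
    (Set.range (colC R (-(((Ring.inverse Λh).comp Bt).comp R))) =
      {p : WithLp 2 (𝒰 × 𝒵) |
        Bt ((WithLp.equiv 2 (𝒰 × 𝒵)) p).1 + Λh ((WithLp.equiv 2 (𝒰 × 𝒵)) p).2 = 0}) ∧
    -- τ₂ = [D* ; Λ^{-1/2}PC*] Q∘ is an isometry with range 𝒢′
    (∀ x : ℰ,
      ‖(colC ((adjoint D).comp Q)
          (((Ring.inverse Λh).comp (P.comp ((adjoint C).comp Q))))) x‖ = ‖x‖) ∧
    (Set.range (colC ((adjoint D).comp Q)
        (((Ring.inverse Λh).comp (P.comp ((adjoint C).comp Q))))) =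
      {p : WithLp 2 (𝒴 × 𝒵) |
        B ((WithLp.equiv 2 (𝒴 × 𝒵)) p).1 +
          Z (Λh (((WithLp.equiv 2 (𝒴 × 𝒵)) p).2)) = 0}) :=
  tau_isometries_onto_G_and_G'_general Z W Wt P Λ B Bt hP hΛ hpos Λh hΛh C D hCD1 hCD2 hCD4 hCD5
    hCD6 R hR Q hQ
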